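/- arXiv:2508.18229 — 2 statements merged into one kernel-verified Lean document; each statement's English description precedes it below -/
import Mathlib

section
/- Let p and p* be real numbers and n ≥ 0, and let Φ_n(x) = ∑_{k=0}^{n} C(n,k) (p*)_{n−k} · k! · L_k^{(−p−1)}(x) · e^{−x/2}. Then for every s ∈ ℂ with Re s > 0, the integral ∫₀^∞ Φ_n(2πx²) x^{s−1} dx converges and equals (1/2) · q_n(s/2) · π^{−s/2} · Γ(s/2), where Γ is the Gamma function. -/
open MeasureTheory Real Set

/-- `qpoly p ps n s` is `n!` times the `n`-th Taylor coefficient at `z = 0` of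
`z ↦ (1 - z)^(p+s) * (1 + z)^(ps - s)` (principal branch powers). -/
noncomputable def qpoly (p ps : ℝ) (n : ℕ) (s : ℂ) : ℂ :=
  iteratedDeriv n (fun z : ℂ => (1 - z) ^ ((p : ℂ) + s) * (1 + z) ^ ((ps : ℂ) - s)) 0

/-- Generalized binomial coefficient `C(w, m) = w(w-1)⋯(w-m+1)/m!` over the reals. -/
noncomputable def genBinomR (w : ℝ) (m : ℕ) : ℝ :=
  (∏ j ∈ Finset.range m, (w - j)) / (m.factorial : ℝ)

/-- The generalized Laguerre polynomial
`L_k^{(α)}(x) = ∑_{j=0}^k ((-1)^j / j!) C(k+α, k-j) x^j`. -/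
noncomputable def laguerre (α : ℝ) (k : ℕ) (x : ℝ) : ℝ :=
  ∑ j ∈ Finset.range (k + 1),
    ((-1 : ℝ) ^ j / (j.factorial : ℝ)) * genBinomR ((k : ℝ) + α) (k - j) * x ^ j

/-- The falling factorial `(x)_m = x(x-1)⋯(x-m+1)`, with `(x)_0 = 1`. -/
noncomputable def fallingFac (x : ℝ) (m : ℕ) : ℝ :=
  ∏ j ∈ Finset.range m, (x - j)

/-- `Φ_n(x) = ∑_{k=0}^n C(n,k) (p*)_{n-k} k! L_k^{(-p-1)}(x) e^{-x/2}`. -/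
noncomputable def PhiFun (p ps : ℝ) (n : ℕ) (x : ℝ) : ℝ :=
  ∑ k ∈ Finset.range (n + 1),
    (n.choose k : ℝ) * fallingFac ps (n - k) * (k.factorial : ℝ) *
      laguerre (-p - 1) k x * Real.exp (-x / 2)

/-!
Expanding the Laguerre polynomials, `Φ_n(2πx²)` is a finite combination of the Gaussian moments
`(πx²)^j e^{-πx²}`, with Mellin transforms `½ π^{-σ} Γ(σ + j)`, `σ = s/2`. Since
`Γ(σ + j) = Γ(σ) (-1)^j j! C(-σ, j)`, the term `k! L_k^{(-p-1)}` contributes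
`½ π^{-σ} Γ(σ) k! ∑_j C(k-p-1, k-j) 2^j C(-σ, j)`. This sum is the `k`-th coefficient of the
formal series `(1 - X)^{p+σ} (1 + X)^{-σ}`: for `a + m = k` write
`(-1)^a C(p+σ, a) = C((k-p-1) + (-σ-m), a)`, split it by Chu–Vandermonde, and use
`C(-σ, m) C(-σ-m, l) = C(m+l, m) C(-σ, m+l)` and `∑_m C(j, m) = 2^j`. Multiplying by
`(1 + X)^{p*}` gives `(1 - X)^{p+σ} (1 + X)^{p*-σ}`, whose coefficients are `q_n(σ) / n!` by
Leibniz' rule.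
-/

open scoped Nat
open Finset

theorem Finset.Nat.sum_antidiagonal_antidiagonal_assoc {M : Type*} [AddCommMonoid M]
    (f : ℕ → ℕ → ℕ → M) (k : ℕ) :
    ∑ x ∈ antidiagonal k, ∑ y ∈ antidiagonal x.1, f y.1 y.2 x.2 =
      ∑ x ∈ antidiagonal k, ∑ y ∈ antidiagonal x.2, f x.1 y.2 y.1 := by
  rw [sum_sigma', sum_sigma']
  refine sum_bij' (fun x _ => ⟨(x.2.1, x.1.2 + x.2.2), (x.1.2, x.2.2)⟩)
    (fun x _ => ⟨(x.1.1 + x.2.2, x.2.1), (x.1.1, x.2.2)⟩) ?_ ?_ ?_ ?_ ?_ <;>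
    simp only [mem_sigma, HasAntidiagonal.mem_antidiagonal, and_imp, Sigma.forall, Prod.forall,
      and_true]
  · intros; omega
  · intros; omega
  · rintro - - - - - rfl; rfl
  · rintro - - - - - rfl; rfl
  · simp

section BinomialSeries

variable {R : Type*} [CommRing R] [BinomialRing R]

theorem descPochhammer_eval_eq_factorial_mul_choose (r : R) (n : ℕ) :
    (descPochhammer R n).eval r = n ! * Ring.choose r n := by
  rw [← descPochhammer_map (algebraMap ℤ R), ← Polynomial.eval₂_eq_eval_map,
    ← Polynomial.aeval_def, Polynomial.aeval_eq_smeval,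
    Ring.descPochhammer_eq_factorial_smul_choose, nsmul_eq_mul]

theorem Ring.sum_antidiagonal_choose_mul_choose_sub (r : R) (j : ℕ) :
    ∑ x ∈ antidiagonal j, Ring.choose r x.1 * Ring.choose (r - x.1) x.2 =
      2 ^ j * Ring.choose r j := by
  calc ∑ x ∈ antidiagonal j, Ring.choose r x.1 * Ring.choose (r - x.1) x.2
      = ∑ x ∈ antidiagonal j, (j.choose x.1 : R) * Ring.choose r j := by
        refine sum_congr rfl fun x hx => ?_
        rw [HasAntidiagonal.mem_antidiagonal] at hx
        rw [← nsmul_eq_mul, Ring.choose_smul_choose r (by omega : x.1 ≤ j), ← hx,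
          Nat.add_sub_cancel_left]
    _ = 2 ^ j * Ring.choose r j := by
        rw [← sum_mul, Nat.sum_antidiagonal_eq_sum_range_succ_mk]
        exact_mod_cast congrArg (fun m : ℕ => (m : R) * Ring.choose r j) (Nat.sum_range_choose j)

theorem Ring.sum_antidiagonal_choose_add_sub_mul_choose (c r : R) (k : ℕ) :
    ∑ x ∈ antidiagonal k, Ring.choose (c + (r - x.2)) x.1 * Ring.choose r x.2 =
      ∑ x ∈ antidiagonal k, Ring.choose c x.1 * (2 ^ x.2 * Ring.choose r x.2) := by
  have vandermonde (a b : R) (n : ℕ) := Ring.add_choose_eq n (Commute.all a b)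
  simp_rw [vandermonde, sum_mul]
  rw [Nat.sum_antidiagonal_antidiagonal_assoc
    (fun i l m => Ring.choose c i * Ring.choose (r - m) l * Ring.choose r m)]
  refine sum_congr rfl fun x _ => ?_
  rw [← Ring.sum_antidiagonal_choose_mul_choose_sub, mul_sum]
  exact sum_congr rfl fun y _ => by ring

theorem PowerSeries.coeff_rescale_neg_one_binomialSeries_mul (q r : R) (k : ℕ) :
    coeff k (rescale (-1) (binomialSeries R (q - r)) * binomialSeries R r) =
      ∑ j ∈ range (k + 1), Ring.choose (k - q - 1) (k - j) * 2 ^ j * Ring.choose r j := by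
  have upper_negation : ∀ x ∈ antidiagonal k,
      (-1) ^ x.1 * Ring.choose (q - r) x.1 * Ring.choose r x.2 =
        Ring.choose ((k - q - 1) + (r - x.2)) x.1 * Ring.choose r x.2 := by
    intro x hx
    rw [HasAntidiagonal.mem_antidiagonal] at hx
    have harg : (k : R) - q - 1 + (r - x.2) = -(q - r - x.1 + 1) := by
      rw [← hx]; push_cast; ring
    rw [harg, Ring.choose_neg, show q - r - x.1 + 1 + x.1 - 1 = q - r by ring, Units.smul_def,
      zsmul_eq_mul, Int.cast_negOnePow_natCast]
  simp only [coeff_mul, coeff_rescale, binomialSeries_coeff, smul_eq_mul, mul_one]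
  rw [sum_congr rfl upper_negation, Ring.sum_antidiagonal_choose_add_sub_mul_choose,
    ← Nat.sum_antidiagonal_swap, Nat.sum_antidiagonal_eq_sum_range_succ_mk]
  refine sum_congr rfl fun j _ => ?_
  simp only [Prod.swap_prod_mk]
  ring

end BinomialSeries

theorem PowerSeries.factorial_mul_coeff_mul {S : Type*} [CommSemiring S] (F G : PowerSeries S)
    (n : ℕ) :
    (n ! : S) * coeff n (F * G) = ∑ k ∈ range (n + 1),
      (n.choose k : S) * (k ! * coeff k F) * ((n - k)! * coeff (n - k) G) := by
  rw [coeff_mul, mul_sum, Nat.sum_antidiagonal_eq_sum_range_succ_mk]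
  refine sum_congr rfl fun k hk => ?_
  rw [← Nat.choose_mul_factorial_mul_factorial (Nat.lt_succ_iff.mp (mem_range.mp hk))]
  push_cast
  ring_nf

theorem iteratedDeriv_mul_eq_factorial_mul_coeff {𝕜 : Type*} [NontriviallyNormedField 𝕜]
    {f g : 𝕜 → 𝕜} {x : 𝕜} {n : ℕ} {F G : PowerSeries 𝕜}
    (hf : ContDiffAt 𝕜 n f x) (hg : ContDiffAt 𝕜 n g x)
    (hF : ∀ k, iteratedDeriv k f x = k ! * PowerSeries.coeff k F)
    (hG : ∀ k, iteratedDeriv k g x = k ! * PowerSeries.coeff k G) :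
    iteratedDeriv n (fun z => f z * g z) x = n ! * PowerSeries.coeff n (F * G) := by
  rw [iteratedDeriv_fun_mul hf hg, PowerSeries.factorial_mul_coeff_mul]
  simp only [hF, hG]

namespace Complex

theorem iteratedDeriv_one_add_cpow_zero (a : ℂ) (n : ℕ) :
    iteratedDeriv n (fun z : ℂ => (1 + z) ^ a) 0 =
      n ! * PowerSeries.coeff n (PowerSeries.binomialSeries ℂ a) := by
  rw [iteratedDeriv_eq_iteratedFDeriv,
    ← one_add_cpow_hasFPowerSeriesOnBall_zero.factorial_smul 1 n, binomialSeries_apply]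
  simp [nsmul_eq_mul]

theorem iteratedDeriv_one_sub_cpow_zero (a : ℂ) (n : ℕ) :
    iteratedDeriv n (fun z : ℂ => (1 - z) ^ a) 0 =
      n ! * PowerSeries.coeff n (PowerSeries.rescale (-1) (PowerSeries.binomialSeries ℂ a)) := by
  simp_rw [sub_eq_add_neg]
  rw [iteratedDeriv_comp_neg n (fun z : ℂ => (1 + z) ^ a), neg_zero,
    iteratedDeriv_one_add_cpow_zero, PowerSeries.coeff_rescale, smul_eq_mul]
  ring

theorem iteratedDeriv_one_sub_cpow_mul_one_add_cpow_zero (a b : ℂ) (n : ℕ) :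
    iteratedDeriv n (fun z : ℂ => (1 - z) ^ a * (1 + z) ^ b) 0 =
      n ! * PowerSeries.coeff n (PowerSeries.rescale (-1) (PowerSeries.binomialSeries ℂ a) *
        PowerSeries.binomialSeries ℂ b) :=
  iteratedDeriv_mul_eq_factorial_mul_coeff
    ((analyticAt_const.sub analyticAt_id).cpow analyticAt_const (by simp)).contDiffAt
    ((analyticAt_const.add analyticAt_id).cpow analyticAt_const (by simp)).contDiffAt
    (iteratedDeriv_one_sub_cpow_zero a) (iteratedDeriv_one_add_cpow_zero b)

theorem Gamma_add_nat_eq_mul_choose_neg {σ : ℂ} (hσ : 0 < σ.re) (j : ℕ) :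
    Gamma (σ + j) = Gamma σ * ((-1) ^ j * j ! * Ring.choose (-σ) j) := by
  have hσ_ne_neg_nat : ∀ k : ℕ, σ ≠ -k := by
    rintro k rfl
    simp only [neg_re, natCast_re, Left.neg_pos_iff] at hσ
    linarith [(k.cast_nonneg : (0 : ℝ) ≤ k)]
  have h := Gamma_add_nat_div_Gamma_eq (n := j) σ hσ_ne_neg_nat
  rw [div_eq_iff (Gamma_ne_zero_of_re_pos hσ)] at h
  rw [h, ← neg_neg σ, ascPochhammer_eval_neg_eq_descPochhammer, neg_neg,
    descPochhammer_eval_eq_factorial_mul_choose]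
  ring

end Complex

section Mellin

variable {E : Type*} [NormedAddCommGroup E] [NormedSpace ℂ E] {s : ℂ}

theorem hasMellin_sum {ι : Type*} (u : Finset ι) {f : ι → ℝ → E} {m : ι → E}
    (hf : ∀ i ∈ u, HasMellin (f i) s (m i)) :
    HasMellin (fun t => ∑ i ∈ u, f i t) s (∑ i ∈ u, m i) := by
  classical
  induction u using Finset.induction_on with
  | empty => simp [HasMellin, MellinConvergent, mellin]
  | insert i u hi ih =>
    simp_rw [sum_insert hi]
    obtain ⟨hi_conv, hi⟩ := hf i (mem_insert_self i u)
    obtain ⟨hu_conv, hu⟩ := ih fun j hj => hf j (mem_insert_of_mem hj)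
    rw [← hi, ← hu]
    exact hasMellin_add hi_conv hu_conv

theorem HasMellin.const_mul {f : ℝ → ℂ} {m : ℂ} (h : HasMellin f s m) (c : ℂ) :
    HasMellin (fun t => c * f t) s (c * m) := by
  simpa only [smul_eq_mul, h.2] using hasMellin_const_smul h.1 c

theorem HasMellin.comp_mul_left {f : ℝ → E} {m : E} (h : HasMellin f s m) {a : ℝ} (ha : 0 < a) :
    HasMellin (fun t => f (a * t)) s ((a : ℂ) ^ (-s) • m) :=
  ⟨(MellinConvergent.comp_mul_left ha).mpr h.1, by rw [mellin_comp_mul_left _ _ ha, h.2]⟩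

theorem HasMellin.comp_sq {f : ℝ → E} {m : E} (h : HasMellin f (s / 2) m) :
    HasMellin (fun t => f (t ^ 2)) s ((2 : ℝ)⁻¹ • m) := by
  have h2 : s / ((2 : ℝ) : ℂ) = s / 2 := by norm_num
  have hconv := (MellinConvergent.comp_rpow (f := f) (s := s) two_ne_zero).mpr (h2 ▸ h.1)
  have hval := mellin_comp_rpow f s 2
  simp only [Real.rpow_two, h2, h.2, abs_two] at hconv hval
  exact ⟨hconv, hval⟩

end Mellin

theorem hasMellin_pow_mul_exp_neg (j : ℕ) {w : ℂ} (hw : 0 < w.re) :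
    HasMellin (fun t : ℝ => ((t ^ j * rexp (-t) : ℝ) : ℂ)) w (Complex.Gamma (w + j)) := by
  have hw' : 0 < (w + j).re := by simp only [Complex.add_re, Complex.natCast_re]; positivity
  have hGamma :
      HasMellin (fun t : ℝ => ((rexp (-t) : ℝ) : ℂ)) (w + j) (Complex.Gamma (w + j)) :=
    ⟨by simpa only [MellinConvergent, smul_eq_mul, mul_comm] using
        Complex.GammaIntegral_convergent hw',
      by rw [Complex.Gamma_eq_integral hw', Complex.GammaIntegral_eq_mellin]⟩
  have hfun : (fun t : ℝ => ((t ^ j * rexp (-t) : ℝ) : ℂ)) =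
      fun t : ℝ => (t : ℂ) ^ (j : ℂ) • ((rexp (-t) : ℝ) : ℂ) := by
    ext t
    simp
  rw [hfun]
  exact ⟨MellinConvergent.cpow_smul.mpr hGamma.1, by rw [mellin_cpow_smul, hGamma.2]⟩

theorem hasMellin_mul_sq_pow_mul_exp_neg {c : ℝ} (hc : 0 < c) (j : ℕ) {s : ℂ}
    (hs : 0 < s.re) :
    HasMellin (fun t : ℝ => (((c * t ^ 2) ^ j * rexp (-(c * t ^ 2)) : ℝ) : ℂ)) s
      (2⁻¹ * (c : ℂ) ^ (-(s / 2)) * Complex.Gamma (s / 2 + j)) := by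
  have hs' : 0 < (s / 2).re := by simpa using hs
  simpa [smul_eq_mul, mul_assoc] using
    ((hasMellin_pow_mul_exp_neg j hs').comp_mul_left hc).comp_sq

theorem genBinomR_eq_choose (w : ℝ) (m : ℕ) : genBinomR w m = Ring.choose w m := by
  rw [genBinomR, ← descPochhammer_eval_eq_prod_range, descPochhammer_eval_eq_factorial_mul_choose,
    mul_div_cancel_left₀ _ (by positivity)]

theorem fallingFac_eq_factorial_mul_choose (x : ℝ) (m : ℕ) :
    fallingFac x m = m ! * Ring.choose x m := by
  rw [fallingFac, ← descPochhammer_eval_eq_prod_range,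
    descPochhammer_eval_eq_factorial_mul_choose]

theorem hasMellin_laguerre_mul_exp (α : ℝ) (k : ℕ) {s : ℂ} (hs : 0 < s.re) :
    HasMellin
      (fun t : ℝ => ((laguerre α k (2 * π * t ^ 2) * rexp (-(2 * π * t ^ 2) / 2) : ℝ) : ℂ)) s
      (2⁻¹ * (π : ℂ) ^ (-(s / 2)) * Complex.Gamma (s / 2) * ∑ j ∈ range (k + 1),
        Ring.choose ((k : ℂ) + α) (k - j) * 2 ^ j * Ring.choose (-(s / 2)) j) := by
  have hfun :
      (fun t : ℝ => ((laguerre α k (2 * π * t ^ 2) * rexp (-(2 * π * t ^ 2) / 2) : ℝ) : ℂ)) =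
        fun t => ∑ j ∈ range (k + 1),
          ((-1) ^ j / j ! * Ring.choose ((k : ℂ) + α) (k - j) * 2 ^ j) *
            (((π * t ^ 2) ^ j * rexp (-(π * t ^ 2)) : ℝ) : ℂ) := by
    ext t
    rw [laguerre, sum_mul]
    push_cast [genBinomR_eq_choose]
    refine sum_congr rfl fun j _ => ?_
    rw [show -(2 * (π : ℂ) * t ^ 2) / 2 = -(π * t ^ 2) by ring]
    ring
  rw [hfun, mul_sum]
  refine hasMellin_sum _ fun j _ => ?_
  convert (hasMellin_mul_sq_pow_mul_exp_neg pi_pos j hs).const_mul _ using 1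
  rw [Complex.Gamma_add_nat_eq_mul_choose_neg (by simpa using hs)]
  have hsq : ((-1 : ℂ) ^ j) ^ 2 = 1 := by rw [← pow_mul, pow_mul', neg_one_sq, one_pow]
  field_simp
  rw [hsq, mul_one, mul_div_cancel_right₀ _ (Nat.cast_ne_zero.mpr j.factorial_ne_zero)]

theorem qpoly_eq_sum (p ps : ℝ) (n : ℕ) (σ : ℂ) :
    qpoly p ps n σ =
      ∑ k ∈ range (n + 1), ((n.choose k * fallingFac ps (n - k) * k ! : ℝ) : ℂ) *
        ∑ j ∈ range (k + 1),
          Ring.choose ((k : ℂ) + ((-p - 1 : ℝ) : ℂ)) (k - j) * 2 ^ j * Ring.choose (-σ) j := by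
  rw [qpoly, Complex.iteratedDeriv_one_sub_cpow_mul_one_add_cpow_zero,
    show (ps : ℂ) - σ = -σ + ps by ring, PowerSeries.binomialSeries_add (-σ), ← mul_assoc,
    PowerSeries.factorial_mul_coeff_mul]
  refine sum_congr rfl fun k _ => ?_
  rw [show (p : ℂ) + σ = p - (-σ) by ring, PowerSeries.coeff_rescale_neg_one_binomialSeries_mul,
    PowerSeries.binomialSeries_coeff, fallingFac_eq_factorial_mul_choose]
  push_cast
  ring_nf

theorem hasMellin_PhiFun_sq (p ps : ℝ) (n : ℕ) {s : ℂ} (hs : 0 < s.re) :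
    HasMellin (fun t : ℝ => (PhiFun p ps n (2 * π * t ^ 2) : ℂ)) s
      (2⁻¹ * (π : ℂ) ^ (-(s / 2)) * Complex.Gamma (s / 2) * qpoly p ps n (s / 2)) := by
  have hfun : (fun t : ℝ => (PhiFun p ps n (2 * π * t ^ 2) : ℂ)) = fun t =>
      ∑ k ∈ range (n + 1), ((n.choose k * fallingFac ps (n - k) * k ! : ℝ) : ℂ) *
        ((laguerre (-p - 1) k (2 * π * t ^ 2) * rexp (-(2 * π * t ^ 2) / 2) : ℝ) : ℂ) := by
    ext t
    push_cast [PhiFun]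
    simp only [mul_assoc]
  rw [hfun, qpoly_eq_sum, mul_sum]
  refine hasMellin_sum _ fun k _ => ?_
  convert (hasMellin_laguerre_mul_exp (-p - 1) k hs).const_mul _ using 1
  ring

theorem mellin_PhiFun_sq (p ps : ℝ) (n : ℕ) (s : ℂ) (hs : 0 < s.re) :
    IntegrableOn (fun x : ℝ => (PhiFun p ps n (2 * π * x ^ 2) : ℂ) * (x : ℂ) ^ (s - 1))
      (Ioi (0 : ℝ)) ∧
    ∫ x in Ioi (0 : ℝ), (PhiFun p ps n (2 * π * x ^ 2) : ℂ) * (x : ℂ) ^ (s - 1) =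
      (1 / 2) * qpoly p ps n (s / 2) * (π : ℂ) ^ (-s / 2) * Complex.Gamma (s / 2) := by
  obtain ⟨hconv, hmellin⟩ := hasMellin_PhiFun_sq p ps n hs
  simp only [MellinConvergent, mellin, smul_eq_mul] at hconv hmellin
  simp_rw [mul_comm _ ((_ : ℂ) ^ (s - 1))]
  refine ⟨hconv, ?_⟩
  rw [hmellin, neg_div]
  ring
end

section
/- Let t ∈ (0,1) and let z ∈ ℂ lie in the open fourth quadrant (Re z > 0, Im z < 0) with |z| > 1. If Re φ(z, t) < Re φ(ζ(t), t), then Im φ_z(z, t) < 0, where φ_z(z,t) = −1/z + i t/(1−z) + i t/(1+z). -/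
open Complex Set

/-- `φ(z,t) = i t Log(1+z) - i t Log(1-z) - Log z`, with principal logarithms. -/
noncomputable def phiFn (t : ℝ) (z : ℂ) : ℂ :=
  Complex.I * (t : ℂ) * Complex.log (1 + z) - Complex.I * (t : ℂ) * Complex.log (1 - z) -
    Complex.log z

/-- The saddle point `ζ(t) = -i t + √(1-t²)`. -/
noncomputable def zetaPt (t : ℝ) : ℂ :=
  -Complex.I * (t : ℂ) + (Real.sqrt (1 - t ^ 2) : ℂ)

/-- The `z`-derivative `φ_z(z,t) = -1/z + i t/(1-z) + i t/(1+z)`. -/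
noncomputable def phiZ (t : ℝ) (z : ℂ) : ℂ :=
  -1 / z + Complex.I * (t : ℂ) / (1 - z) + Complex.I * (t : ℂ) / (1 + z)


/-! For `Im z < 0` the difference `arg (1 - z) - arg (1 + z)` is the argument of
`(1 - z) * conj (1 + z) = (1 - |z|²) - 2 i Im z`, which lies in the upper half plane, so
`Re φ(z, t) = t (π/2 + arctan v) - log |z|` with `v = (|z|² - 1) / (-2 Im z)`; since `|ζ(t)| = 1`
this gives `Re φ(ζ(t), t) = t π/2`. The hypothesis therefore reads `t arctan v < log |z|`, and
`v / √(1 + v²) < arctan v` together with `log r < (r - r⁻¹)/2` turn it into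
`4 t² |z|² < (|z|² - 1)² + 4 (Im z)² = |1 - z|² |1 + z|²`. Writing
`Im φ_z = Im z / |z|² + 2 t (1 - (Re z)² + (Im z)²) / (|1 - z|² |1 + z|²)`, this bound is exactly
what makes the second term smaller than `-Im z / |z|²`. -/

open scoped Real ComplexConjugate

namespace Complex

theorem arg_eq_pi_div_two_sub_arctan {w : ℂ} (hw : 0 < w.im) :
    arg w = π / 2 - Real.arctan (w.re / w.im) := by
  have h0 : 0 < arg w :=
    (arg_nonneg_iff.2 hw.le).lt_of_ne fun h => hw.ne' (arg_eq_zero_iff.1 h.symm).2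
  have hπ : arg w < π := arg_lt_pi_iff.2 (Or.inr hw.ne')
  rw [← inv_div w.im, ← tan_arg, ← Real.tan_pi_div_two_sub,
    Real.arctan_tan (by linarith) (by linarith)]
  ring

theorem re_one_sub_mul_conj_one_add (z : ℂ) : ((1 - z) * conj (1 + z)).re = 1 - ‖z‖ ^ 2 := by
  rw [← normSq_eq_norm_sq, normSq_apply]
  simp only [mul_re, sub_re, add_re, conj_re, conj_im, sub_im, add_im, one_re, one_im]
  ring

theorem im_one_sub_mul_conj_one_add (z : ℂ) : ((1 - z) * conj (1 + z)).im = 2 * -z.im := by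
  simp only [mul_im, sub_re, add_re, conj_re, conj_im, sub_im, add_im, one_re, one_im]
  ring

theorem arg_one_sub_sub_arg_one_add {z : ℂ} (hz : z.im < 0) :
    arg (1 - z) - arg (1 + z) = arg ((1 - z) * conj (1 + z)) := by
  have h₁ : 1 - z ≠ 0 := fun h => by simp [(sub_eq_zero.1 h).symm] at hz
  have h₂ : conj (1 + z) ≠ 0 :=
    (map_ne_zero _).2 fun h => by simp [eq_neg_of_add_eq_zero_right h] at hz
  obtain ⟨k, hk⟩ : ∃ k : ℤ,
      arg (1 - z) - arg (1 + z) - arg ((1 - z) * conj (1 + z)) = 2 * π * k := by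
    rw [← Real.Angle.angle_eq_iff_two_pi_dvd_sub, arg_mul_coe_angle h₁ h₂, arg_conj_coe_angle,
      Real.Angle.coe_sub]
    abel
  -- the difference of arguments lies in `(0, 2π)` and `arg ((1 - z) * conj (1 + z))` in `[0, π]`
  have := arg_nonneg_iff.2 (by simpa using hz.le : 0 ≤ (1 - z).im)
  have := arg_le_pi (1 - z)
  have := arg_neg_iff.2 (by simpa using hz : (1 + z).im < 0)
  have := neg_pi_lt_arg (1 + z)
  have := arg_nonneg_iff.2 ((im_one_sub_mul_conj_one_add z).symm ▸ (by linarith) :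
    0 ≤ ((1 - z) * conj (1 + z)).im)
  have := arg_le_pi ((1 - z) * conj (1 + z))
  have hk0 : k = 0 := by
    have : k < 1 := by exact_mod_cast (by nlinarith [Real.pi_pos] : (k : ℝ) < 1)
    have : -1 < k := by exact_mod_cast (by nlinarith [Real.pi_pos] : (-1 : ℝ) < k)
    omega
  rwa [hk0, Int.cast_zero, mul_zero, sub_eq_zero] at hk

end Complex

namespace Real

theorem log_lt_sub_inv_div_two {x : ℝ} (hx : 1 < x) : log x < (x - x⁻¹) / 2 := by
  rw [← sinh_log (by linarith)]
  exact self_lt_sinh_iff.2 (log_pos hx)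

theorem div_sqrt_one_add_sq_lt_arctan {x : ℝ} (hx : 0 < x) : x / √(1 + x ^ 2) < arctan x := by
  rw [← sin_arctan]
  exact sin_lt (arctan_pos.2 hx)

theorem sq_mul_lt_of_mul_arctan_lt_log {t r u : ℝ} (ht : 0 ≤ t) (hu : 0 < u) (hr : 1 < r)
    (h : t * arctan ((r ^ 2 - 1) / (2 * u)) < log r) :
    (2 * t * r) ^ 2 < (r ^ 2 - 1) ^ 2 + (2 * u) ^ 2 := by
  set v := (r ^ 2 - 1) / (2 * u) with hv
  have hv0 : 0 < v := div_pos (by nlinarith) (by positivity)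
  have hsinh : (r - r⁻¹) / 2 = u * v / r := by rw [hv]; field_simp
  have hlt : t * (v / √(1 + v ^ 2)) < u * v / r :=
    calc t * (v / √(1 + v ^ 2)) ≤ t * arctan v :=
          mul_le_mul_of_nonneg_left (div_sqrt_one_add_sq_lt_arctan hv0).le ht
      _ < log r := h
      _ < u * v / r := hsinh ▸ log_lt_sub_inv_div_two hr
  have hs : 0 < √(1 + v ^ 2) := by positivity
  have hroot : t * r < u * √(1 + v ^ 2) := by
    rw [mul_div_assoc', div_lt_div_iff₀ hs (by linarith)] at hlt
    nlinarith
  have hsq : t ^ 2 * r ^ 2 < u ^ 2 * (1 + v ^ 2) := by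
    simpa [mul_pow, sq_sqrt (by positivity : 0 ≤ 1 + v ^ 2)] using
      pow_lt_pow_left₀ hroot (by positivity) two_ne_zero
  have hS : 4 * (u ^ 2 * (1 + v ^ 2)) = (r ^ 2 - 1) ^ 2 + (2 * u) ^ 2 := by
    rw [hv]; field_simp; ring
  nlinarith

end Real

theorem re_phiFn (t : ℝ) (z : ℂ) :
    (phiFn t z).re = t * (arg (1 - z) - arg (1 + z)) - Real.log ‖z‖ := by
  simp [phiFn, log_re, log_im, mul_sub, neg_add_eq_sub]

theorem re_phiFn_of_im_neg (t : ℝ) {z : ℂ} (hz : z.im < 0) :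
    (phiFn t z).re = t * (π / 2 + Real.arctan ((‖z‖ ^ 2 - 1) / (2 * -z.im))) - Real.log ‖z‖ := by
  rw [re_phiFn, arg_one_sub_sub_arg_one_add hz, arg_eq_pi_div_two_sub_arctan
    (by rw [im_one_sub_mul_conj_one_add]; linarith), re_one_sub_mul_conj_one_add,
    im_one_sub_mul_conj_one_add, ← neg_sub (‖z‖ ^ 2), neg_div, Real.arctan_neg]
  ring

theorem zetaPt_re (t : ℝ) : (zetaPt t).re = √(1 - t ^ 2) := by simp [zetaPt]

theorem zetaPt_im (t : ℝ) : (zetaPt t).im = -t := by simp [zetaPt]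

theorem norm_zetaPt {t : ℝ} (ht : t ^ 2 ≤ 1) : ‖zetaPt t‖ = 1 := by
  rw [← pow_eq_one_iff_of_nonneg (norm_nonneg _) two_ne_zero, ← normSq_eq_norm_sq, normSq_apply,
    zetaPt_re, zetaPt_im, Real.mul_self_sqrt (by linarith)]
  ring

theorem re_phiFn_zetaPt {t : ℝ} (h₀ : 0 < t) (h₁ : t ≤ 1) :
    (phiFn t (zetaPt t)).re = t * (π / 2) := by
  rw [re_phiFn_of_im_neg t (by rw [zetaPt_im]; linarith), norm_zetaPt (by nlinarith)]
  simp

theorem im_phiZ (t : ℝ) {z : ℂ} (h₁ : z ≠ 1) (h₂ : z ≠ -1) :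
    (phiZ t z).im = z.im / ‖z‖ ^ 2 +
      2 * t * (1 - z.re ^ 2 + z.im ^ 2) / ((‖z‖ ^ 2 - 1) ^ 2 + (2 * z.im) ^ 2) := by
  have n₁ : normSq (1 - z) ≠ 0 := normSq_eq_zero.not.2 (sub_ne_zero.2 h₁.symm)
  have n₂ : normSq (1 + z) ≠ 0 := normSq_eq_zero.not.2 fun h => h₂ (eq_neg_of_add_eq_zero_right h)
  have hS : (normSq z - 1) ^ 2 + (2 * z.im) ^ 2 = normSq (1 - z) * normSq (1 + z) := by
    simp only [normSq_apply, sub_re, add_re, sub_im, add_im, one_re, one_im]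
    ring
  have hnum : t * (1 - z.re) * normSq (1 + z) + normSq (1 - z) * (t * (1 + z.re)) =
      2 * t * (1 - z.re ^ 2 + z.im ^ 2) := by
    simp only [normSq_apply, sub_re, add_re, sub_im, add_im, one_re, one_im]
    ring
  rw [← normSq_eq_norm_sq, hS]
  simp only [phiZ, add_im, div_im, neg_im, one_im, neg_zero, zero_mul, zero_div, neg_re, one_re,
    neg_mul, one_mul, zero_sub, mul_im, I_re, ofReal_im, mul_zero, I_im, ofReal_re, zero_add,
    sub_re, mul_re, sub_self, sub_im, mul_neg, sub_zero, add_re]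
  rw [add_assoc, div_add_div _ _ n₁ n₂, hnum, neg_div, neg_neg]

theorem im_phiZ_neg_of_sq_mul_lt {t : ℝ} {z : ℂ} (ht : 0 ≤ t) (hz : z.im < 0) (hz₁ : 1 ≤ ‖z‖)
    (h : (2 * t * ‖z‖) ^ 2 < (‖z‖ ^ 2 - 1) ^ 2 + (2 * z.im) ^ 2) :
    (phiZ t z).im < 0 := by
  rw [im_phiZ t (fun h => by simp [h] at hz) (fun h => by simp [h] at hz)]
  set s := 1 - z.re ^ 2 + z.im ^ 2
  set S := (‖z‖ ^ 2 - 1) ^ 2 + (2 * z.im) ^ 2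
  have hR : ‖z‖ ^ 2 = z.re ^ 2 + z.im ^ 2 := by rw [← normSq_eq_norm_sq, normSq_apply]; ring
  have hR₁ : 1 ≤ ‖z‖ ^ 2 := one_le_pow₀ hz₁
  have hS : 0 < S := add_pos_of_nonneg_of_pos (sq_nonneg _) (by nlinarith)
  have hy : z.im / ‖z‖ ^ 2 < 0 := div_neg_of_neg_of_pos hz (by linarith)
  rcases le_or_gt s 0 with hs | hs
  · have : 2 * t * s / S ≤ 0 := div_nonpos_of_nonpos_of_nonneg (by nlinarith) hS.le
    linarith
  · have hgap : z.im ^ 2 * S - s ^ 2 * ‖z‖ ^ 2 =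
        z.re ^ 2 * (‖z‖ ^ 2 - 1) * (s + 2 * z.im ^ 2) := by
      simp only [S, s, hR]
      ring
    have hsS : s ^ 2 * ‖z‖ ^ 2 ≤ z.im ^ 2 * S := by
      have : 0 ≤ z.re ^ 2 * (‖z‖ ^ 2 - 1) * (s + 2 * z.im ^ 2) :=
        mul_nonneg (mul_nonneg (sq_nonneg _) (by linarith)) (by positivity)
      linarith
    have : 2 * t * s * ‖z‖ ^ 2 < -z.im * S := by
      refine lt_of_pow_lt_pow_left₀ 2 (by nlinarith) ?_
      calc (2 * t * s * ‖z‖ ^ 2) ^ 2 = (2 * t * ‖z‖) ^ 2 * (s ^ 2 * ‖z‖ ^ 2) := by ring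
        _ < S * (s ^ 2 * ‖z‖ ^ 2) := by gcongr
        _ ≤ S * (z.im ^ 2 * S) := by gcongr
        _ = (-z.im * S) ^ 2 := by ring
    rw [div_add_div _ _ (by linarith) hS.ne']
    exact div_neg_of_neg_of_pos (by nlinarith) (by positivity)

theorem im_phiZ_neg_general (t : ℝ) (ht : t ∈ Ioo (0 : ℝ) 1) (z : ℂ)
    (him : z.im < 0) (habs : 1 < ‖z‖)
    (hphi : (phiFn t z).re < (phiFn t (zetaPt t)).re) :
    (phiZ t z).im < 0 := by
  rw [re_phiFn_of_im_neg t him, re_phiFn_zetaPt ht.1 ht.2.le] at hphi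
  have hlog : t * Real.arctan ((‖z‖ ^ 2 - 1) / (2 * -z.im)) < Real.log ‖z‖ := by linarith
  refine im_phiZ_neg_of_sq_mul_lt ht.1.le him habs.le ?_
  simpa using Real.sq_mul_lt_of_mul_arctan_lt_log ht.1.le (neg_pos.2 him) habs hlog

theorem im_phiZ_neg (t : ℝ) (ht : t ∈ Ioo (0 : ℝ) 1) (z : ℂ)
    (hre : 0 < z.re) (him : z.im < 0) (habs : 1 < ‖z‖)
    (hphi : (phiFn t z).re < (phiFn t (zetaPt t)).re) :
    (phiZ t z).im < 0 :=
  im_phiZ_neg_general t ht z him habs hphi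
end
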